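/- arXiv:2411.05993 — 5 statements merged into one kernel-verified Lean document; each statement's English description precedes it below -/
import Mathlib

section
/- Let N ≥ 1, let 0 < ᾱ < 1, and let ρ : ℝ^N → [0,∞) be a measurable probability density (∫_{ℝ^N} ρ(u) du = 1). Define p(x) := ∫_{ℝ^N} g_N(x; √ᾱ·u, 1−ᾱ) ρ(u) du and m(x) := (1/p(x)) ∫_{ℝ^N} u · g_N(x; √ᾱ·u, 1−ᾱ) ρ(u) du. Then for every x ∈ ℝ^N one has p(x) > 0, the function log p is differentiable at x, and its gradient satisfies ∇ log p(x) = (√ᾱ·m(x) − x) / (1 − ᾱ). -/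
open MeasureTheory Real

/-! Differentiation under the integral sign is legitimate because the Gaussian kernel and its
gradient are bounded uniformly in `x` by constant multiples of the integrable density (this is
where `r e^{-r²/(2s)} ≤ √s` enters). It gives
`∇p(x) = s⁻¹ ∫ (√ᾱ u − x) g(x, u) ρ(u) du = s⁻¹ (√ᾱ p(x) m(x) − p(x) x)` with `s = 1 − ᾱ`,
and dividing by `p(x) > 0` yields the score. -/

open InnerProductSpace Topology

theorem mul_exp_neg_sq_div_le_sqrt {s : ℝ} (hs : 0 < s) (r : ℝ) :
    r * exp (-r ^ 2 / (2 * s)) ≤ √s := by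
  obtain ⟨t, ht, rfl⟩ : ∃ t, 0 < t ∧ s = t ^ 2 := ⟨√s, sqrt_pos.2 hs, (sq_sqrt hs.le).symm⟩
  have hexp : 1 + r ^ 2 / (2 * t ^ 2) ≤ exp (r ^ 2 / (2 * t ^ 2)) := by
    linarith [add_one_le_exp (r ^ 2 / (2 * t ^ 2))]
  -- AM-GM
  have hamgm : r ≤ t * (1 + r ^ 2 / (2 * t ^ 2)) := by
    field_simp
    nlinarith [sq_nonneg (r - t)]
  rw [sqrt_sq ht.le, neg_div, exp_neg, ← div_eq_mul_inv, div_le_iff₀ (exp_pos _)]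
  exact hamgm.trans (mul_le_mul_of_nonneg_left hexp ht.le)

variable {E : Type*} [NormedAddCommGroup E]

section Gradient

variable [InnerProductSpace ℝ E] [CompleteSpace E]

theorem HasDerivAt.comp_hasGradientAt {f : E → ℝ} {f' : E} {h : ℝ → ℝ} {h' : ℝ} {x : E}
    (hh : HasDerivAt h h' (f x)) (hf : HasGradientAt f f' x) :
    HasGradientAt (h ∘ f) (h' • f') x := by
  rw [hasGradientAt_iff_hasFDerivAt, map_smul]
  exact hh.comp_hasFDerivAt x hf

theorem hasGradientAt_norm_sub_sq (x y : E) :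
    HasGradientAt (fun w => ‖w - y‖ ^ 2) ((2 : ℝ) • (x - y)) x := by
  refine ((hasFDerivAt_id x).sub_const y).norm_sq.congr_fderiv ?_
  ext v
  simp

theorem hasGradientAt_integral_of_dominated_of_gradient_le {α : Type*} [MeasurableSpace α]
    {μ : Measure α} {F : E → α → ℝ} {F' : E → α → E} {x₀ : E} {s : Set E} {bound : α → ℝ}
    (hs : s ∈ 𝓝 x₀) (hF_meas : ∀ᶠ x in 𝓝 x₀, AEStronglyMeasurable (F x) μ)
    (hF_int : Integrable (F x₀) μ) (hF'_meas : AEStronglyMeasurable (F' x₀) μ)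
    (h_bound : ∀ᵐ a ∂μ, ∀ x ∈ s, ‖F' x a‖ ≤ bound a) (bound_integrable : Integrable bound μ)
    (h_diff : ∀ᵐ a ∂μ, ∀ x ∈ s, HasGradientAt (F · a) (F' x a) x) :
    HasGradientAt (fun x ↦ ∫ a, F x a ∂μ) (∫ a, F' x₀ a ∂μ) x₀ :=
  (hasFDerivAt_integral_of_dominated_of_fderiv_le hs hF_meas hF_int
    ((toDual ℝ E).continuous.comp_aestronglyMeasurable hF'_meas)
    (by simpa using h_bound) bound_integrable h_diff).congr_fderiv
    ((toDual ℝ E).toLinearIsometry.integral_comp_comm _)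

theorem HasGradientAt.log {f : E → ℝ} {f' : E} {x : E} (hf : HasGradientAt f f' x)
    (hx : f x ≠ 0) : HasGradientAt (fun y => log (f y)) ((f x)⁻¹ • f') x :=
  (hasDerivAt_log hx).comp_hasGradientAt hf

end Gradient

noncomputable def gaussKernel (s : ℝ) (x y : E) : ℝ := exp (-‖x - y‖ ^ 2 / (2 * s))

section GaussKernel

variable {s : ℝ} {x y : E}

theorem gaussKernel_pos : 0 < gaussKernel s x y := exp_pos _

theorem gaussKernel_le_one (hs : 0 ≤ s) : gaussKernel s x y ≤ 1 :=
  exp_le_one_iff.2 (div_nonpos_of_nonpos_of_nonneg (by simp) (by positivity))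

theorem continuous_gaussKernel (s : ℝ) (x : E) : Continuous (gaussKernel s x) := by
  unfold gaussKernel
  fun_prop

theorem gaussKernel_mul_norm_sub_le (hs : 0 < s) : gaussKernel s x y * ‖x - y‖ ≤ √s := by
  rw [mul_comm]
  exact mul_exp_neg_sq_div_le_sqrt hs _

theorem gaussKernel_mul_norm_le (hs : 0 < s) : gaussKernel s x y * ‖y‖ ≤ √s + ‖x‖ :=
  calc gaussKernel s x y * ‖y‖ ≤ gaussKernel s x y * ‖x - y‖ + gaussKernel s x y * ‖x‖ := by
        rw [← mul_add]
        exact mul_le_mul_of_nonneg_left (by linarith [norm_sub_norm_le y x, norm_sub_rev x y])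
          gaussKernel_pos.le
    _ ≤ √s + 1 * ‖x‖ := by
        gcongr
        exacts [gaussKernel_mul_norm_sub_le hs, gaussKernel_le_one hs.le]
    _ = √s + ‖x‖ := by rw [one_mul]

theorem hasGradientAt_gaussKernel [InnerProductSpace ℝ E] [CompleteSpace E] (s : ℝ) (x y : E) :
    HasGradientAt (gaussKernel s · y) (gaussKernel s x y • s⁻¹ • (y - x)) x := by
  convert (hasDerivAt_exp _).comp_hasGradientAt
    (((hasDerivAt_id _).neg.div_const (2 * s)).comp_hasGradientAt (hasGradientAt_norm_sub_sq x y))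
    using 1
  · rfl
  · simp only [gaussKernel, Function.comp_apply, Pi.neg_apply, id]
    module

end GaussKernel

section GaussianIntegral

variable {α : Type*} [MeasurableSpace α] {μ : Measure α} {ρ : α → ℝ} {φ : α → E} {s : ℝ}

theorem integrable_gaussKernel_mul (hs : 0 ≤ s) (hρ : Integrable ρ μ)
    (hφ : AEStronglyMeasurable φ μ) (x : E) :
    Integrable (fun u => gaussKernel s x (φ u) * ρ u) μ :=
  hρ.bdd_mul ((continuous_gaussKernel s x).comp_aestronglyMeasurable hφ)
    (ae_of_all _ fun _ => by
      rw [norm_of_nonneg gaussKernel_pos.le]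
      exact gaussKernel_le_one hs)

theorem integral_gaussKernel_mul_pos (hs : 0 ≤ s) (hρ₀ : 0 ≤ ρ) (hρ : Integrable ρ μ)
    (hφ : AEStronglyMeasurable φ μ) (hρ_pos : 0 < ∫ u, ρ u ∂μ) (x : E) :
    0 < ∫ u, gaussKernel s x (φ u) * ρ u ∂μ := by
  have hsupport :
      Function.support (fun u => gaussKernel s x (φ u) * ρ u) = Function.support ρ := by
    ext u
    simp [gaussKernel_pos.ne']
  rw [integral_pos_iff_support_of_nonneg hρ₀ hρ] at hρ_pos
  rwa [integral_pos_iff_support_of_nonneg (fun u => mul_nonneg gaussKernel_pos.le (hρ₀ u))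
    (integrable_gaussKernel_mul hs hρ hφ x), hsupport]

variable [InnerProductSpace ℝ E]

theorem integrable_gaussKernel_mul_smul (hs : 0 < s) (hρ : Integrable ρ μ)
    (hφ : AEStronglyMeasurable φ μ) (x : E) :
    Integrable (fun u => (gaussKernel s x (φ u) * ρ u) • φ u) μ := by
  refine (hρ.norm.const_mul (√s + ‖x‖)).mono' ?_ (ae_of_all _ fun u => ?_)
  · exact (((continuous_gaussKernel s x).comp_aestronglyMeasurable hφ).mul hρ.1).smul hφ
  · rw [norm_smul, norm_mul, norm_of_nonneg gaussKernel_pos.le, mul_right_comm]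
    gcongr
    exact gaussKernel_mul_norm_le hs

variable [CompleteSpace E]

theorem integral_gaussKernel_mul_smul_sub (hs : 0 < s) (hρ : Integrable ρ μ)
    (hφ : AEStronglyMeasurable φ μ) (x : E) :
    ∫ u, (gaussKernel s x (φ u) * ρ u) • s⁻¹ • (φ u - x) ∂μ =
      s⁻¹ • (∫ u, (gaussKernel s x (φ u) * ρ u) • φ u ∂μ -
        (∫ u, gaussKernel s x (φ u) * ρ u ∂μ) • x) := by
  simp_rw [smul_comm _ s⁻¹]
  rw [integral_smul]
  congr 1
  simp_rw [smul_sub]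
  rw [integral_sub (integrable_gaussKernel_mul_smul hs hρ hφ x)
    ((integrable_gaussKernel_mul hs.le hρ hφ x).smul_const x), integral_smul_const]

theorem hasGradientAt_integral_gaussKernel_mul (hs : 0 < s) (hρ : Integrable ρ μ)
    (hφ : AEStronglyMeasurable φ μ) (x : E) :
    HasGradientAt (fun x => ∫ u, gaussKernel s x (φ u) * ρ u ∂μ)
      (∫ u, (gaussKernel s x (φ u) * ρ u) • s⁻¹ • (φ u - x) ∂μ) x := by
  have hkernel (z : E) : AEStronglyMeasurable (fun u => gaussKernel s z (φ u)) μ :=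
    (continuous_gaussKernel s z).comp_aestronglyMeasurable hφ
  have hdirection : AEStronglyMeasurable (fun u => s⁻¹ • (φ u - x)) μ :=
    (by fun_prop : Continuous fun v : E => s⁻¹ • (v - x)).comp_aestronglyMeasurable hφ
  refine hasGradientAt_integral_of_dominated_of_gradient_le (s := Set.univ)
    (F' := fun z u => (gaussKernel s z (φ u) * ρ u) • s⁻¹ • (φ u - z))
    (bound := fun u => s⁻¹ * √s * ‖ρ u‖) Filter.univ_mem
    (.of_forall fun z => (hkernel z).mul hρ.1) (integrable_gaussKernel_mul hs.le hρ hφ x)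
    (((hkernel x).mul hρ.1).smul hdirection)
    (ae_of_all _ fun u z _ => ?_) (hρ.norm.const_mul _) (ae_of_all _ fun u z _ => ?_)
  · rw [norm_smul, norm_smul, norm_mul, norm_of_nonneg gaussKernel_pos.le, norm_inv,
      norm_of_nonneg hs.le, norm_sub_rev]
    calc gaussKernel s z (φ u) * ‖ρ u‖ * (s⁻¹ * ‖z - φ u‖)
        = s⁻¹ * (gaussKernel s z (φ u) * ‖z - φ u‖) * ‖ρ u‖ := by ring
      _ ≤ s⁻¹ * √s * ‖ρ u‖ := by gcongr; exact gaussKernel_mul_norm_sub_le hs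
  · convert (hasDerivAt_mul_const (ρ u)).comp_hasGradientAt (hasGradientAt_gaussKernel s z (φ u))
      using 1
    · rfl
    · rw [mul_comm, mul_smul]

theorem hasGradientAt_log_integral_gaussKernel_mul (hs : 0 < s) (hρ : Integrable ρ μ)
    (hφ : AEStronglyMeasurable φ μ) {x : E} (hx : ∫ u, gaussKernel s x (φ u) * ρ u ∂μ ≠ 0) :
    HasGradientAt (fun x => log (∫ u, gaussKernel s x (φ u) * ρ u ∂μ))
      (s⁻¹ • ((∫ u, gaussKernel s x (φ u) * ρ u ∂μ)⁻¹ •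
        ∫ u, (gaussKernel s x (φ u) * ρ u) • φ u ∂μ - x)) x := by
  have := (hasGradientAt_integral_gaussKernel_mul hs hρ hφ x).log hx
  rw [integral_gaussKernel_mul_smul_sub hs hρ hφ] at this
  convert this using 1
  rw [smul_comm _ s⁻¹, smul_sub _ _ (_ • x), smul_smul _ _ x, inv_mul_cancel₀ hx, one_smul]

end GaussianIntegral

theorem conditional_score_function_general
    (N : ℕ) (ᾱ : ℝ) (hα1 : ᾱ < 1)
    (ρ : EuclideanSpace ℝ (Fin N) → ℝ)
    (hρnn : ∀ u, 0 ≤ ρ u) (hρint : ∫ u, ρ u = 1)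
    (g : EuclideanSpace ℝ (Fin N) → EuclideanSpace ℝ (Fin N) → ℝ)
    (hg : ∀ x u, g x u =
      (2 * π * (1 - ᾱ)) ^ (-(N : ℝ) / 2) *
        Real.exp (-‖x - Real.sqrt ᾱ • u‖ ^ 2 / (2 * (1 - ᾱ))))
    (p : EuclideanSpace ℝ (Fin N) → ℝ)
    (hp : ∀ x, p x = ∫ u, g x u * ρ u)
    (m : EuclideanSpace ℝ (Fin N) → EuclideanSpace ℝ (Fin N))
    (hm : ∀ x, m x = (p x)⁻¹ • ∫ u, (g x u * ρ u) • u) :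
    ∀ x : EuclideanSpace ℝ (Fin N),
      0 < p x ∧
      DifferentiableAt ℝ (fun z => Real.log (p z)) x ∧
      gradient (fun z => Real.log (p z)) x
        = (1 - ᾱ)⁻¹ • (Real.sqrt ᾱ • m x - x) := by
  intro x
  set C := (2 * π * (1 - ᾱ)) ^ (-(N : ℝ) / 2)
  have hs : 0 < 1 - ᾱ := sub_pos.2 hα1
  have hC : 0 < C := rpow_pos_of_pos (by positivity) _
  have hρ : Integrable ρ := .of_integral_ne_zero (by rw [hρint]; exact one_ne_zero)
  have hφ : AEStronglyMeasurable (fun u : EuclideanSpace ℝ (Fin N) => √ᾱ • u) :=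
    (continuous_const_smul _).aestronglyMeasurable
  have hgρ (z u) : g z u * ρ u = gaussKernel (1 - ᾱ) z (√ᾱ • u) * (C * ρ u) := by
    rw [hg, gaussKernel]; ring
  have hp' (z) : p z = ∫ u, gaussKernel (1 - ᾱ) z (√ᾱ • u) * (C * ρ u) := by
    simp only [hp, hgρ]
  have hpx : 0 < p x := hp' x ▸ integral_gaussKernel_mul_pos hs.le
    (fun u => mul_nonneg hC.le (hρnn u)) (hρ.const_mul C) hφ
    (by rw [integral_const_mul, hρint, mul_one]; exact hC) x
  have hmx : √ᾱ • m x =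
      (p x)⁻¹ • ∫ u, (gaussKernel (1 - ᾱ) x (√ᾱ • u) * (C * ρ u)) • (√ᾱ • u) := by
    simp only [hm, hgρ, smul_comm _ √ᾱ, integral_smul]
  have hgrad :=
    hasGradientAt_log_integral_gaussKernel_mul hs (hρ.const_mul C) hφ (hp' x ▸ hpx.ne')
  simp only [← hp'] at hgrad
  exact ⟨hpx, hgrad.differentiableAt, by rw [hgrad.gradient, hmx]⟩

/-- **Lemma 1 (conditional score function).**
For `N ≥ 1`, `0 < ᾱ < 1` and a measurable probability density `ρ` on `ℝ^N`,
let `g x u` be the Gaussian density `g_N(x; √ᾱ·u, 1−ᾱ)`,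
`p x = ∫ g_N(x; √ᾱ u, 1−ᾱ) ρ(u) du` and
`m x = (1/p x) ∫ u g_N(x; √ᾱ u, 1−ᾱ) ρ(u) du`.
Then `p x > 0`, `log p` is differentiable at every `x`, and
`∇ log p(x) = (√ᾱ · m(x) − x)/(1 − ᾱ)`. -/
theorem conditional_score_function
    (N : ℕ) (hN : 1 ≤ N) (ᾱ : ℝ) (hα0 : 0 < ᾱ) (hα1 : ᾱ < 1)
    (ρ : EuclideanSpace ℝ (Fin N) → ℝ) (hρmeas : Measurable ρ)
    (hρnn : ∀ u, 0 ≤ ρ u) (hρint : ∫ u, ρ u = 1)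
    (g : EuclideanSpace ℝ (Fin N) → EuclideanSpace ℝ (Fin N) → ℝ)
    (hg : ∀ x u, g x u =
      (2 * π * (1 - ᾱ)) ^ (-(N : ℝ) / 2) *
        Real.exp (-‖x - Real.sqrt ᾱ • u‖ ^ 2 / (2 * (1 - ᾱ))))
    (p : EuclideanSpace ℝ (Fin N) → ℝ)
    (hp : ∀ x, p x = ∫ u, g x u * ρ u)
    (m : EuclideanSpace ℝ (Fin N) → EuclideanSpace ℝ (Fin N))
    (hm : ∀ x, m x = (p x)⁻¹ • ∫ u, (g x u * ρ u) • u) :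
    ∀ x : EuclideanSpace ℝ (Fin N),
      0 < p x ∧
      DifferentiableAt ℝ (fun z => Real.log (p z)) x ∧
      gradient (fun z => Real.log (p z)) x
        = (1 - ᾱ)⁻¹ • (Real.sqrt ᾱ • m x - x) :=
  conditional_score_function_general N ᾱ hα1 ρ hρnn hρint g hg p hp m hm
end

section
/- Fix a noise schedule as in the context and let N ≥ 1. Let t, k be integers with k ≥ 1, 1 ≤ t − k and t ≤ T. Fix x_0, x_t ∈ ℝ^N, let Z_{t}, Z_{t−1}, …, Z_{t−k+1} be independent standard Gaussian vectors in ℝ^N (each distributed as N(0, I_N)), and define the reverse chain X_t := x_t and X_{s−1} := γ_s x_0 + Γ_s^s X_s + σ_s Z_s for s = t, t−1, …, t−k+1. Then X_{t−k} is Gaussian with distribution N(μ_{t,k}, σ²_{t,k} I_N), where μ_{t,k} = (Σ_{i=0}^{k−1} Γ_{t−i−1}^{t−k+1} γ_{t−i}) x_0 + Γ_t^{t−k+1} x_t and σ²_{t,k} = Σ_{i=0}^{k−1} (Γ_{t−i−1}^{t−k+1})² σ²_{t−i}. -/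
/-!
If the current state `U ~ N(m, v I)` is independent of the fresh noise `Z ~ N(0, I)`, the next
state `c + a U + s Z` has law `N(c + a m, (a² v + s²) I)`: coordinatewise this is the convolution
of two real Gaussians. Independence holds because `X_{t-m}` is measurable with respect to the
noises already used. The closed forms `μ_{t,m}`, `σ²_{t,m}` obey the same one-step recursions
because `Γ` is multiplicative along the chain: `Γ_j^j Γ_i^{j+1} = Γ_i^j`.
-/

open MeasureTheory ProbabilityTheory Finset
open scoped NNReal

namespace MeasureTheory.Measure

theorem pi_conv_pi {ι M : Type*} [Fintype ι] [AddMonoid M] [MeasurableSpace M] [MeasurableAdd₂ M]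
    (μ ν : ι → Measure M) [∀ i, IsFiniteMeasure (μ i)] [∀ i, IsFiniteMeasure (ν i)] :
    Measure.pi μ ∗ Measure.pi ν = Measure.pi fun i => μ i ∗ ν i := by
  rw [conv, ← (measurePreserving_arrowProdEquivProdArrow M M ι μ ν).map_eq,
    map_map (by fun_prop) (MeasurableEquiv.measurable _)]
  exact pi_map_pi (f := fun _ (p : M × M) => p.1 + p.2) fun _ => by fun_prop

theorem pi_dirac {ι : Type*} [Fintype ι] {X : ι → Type*} [∀ i, MeasurableSpace (X i)]
    (x : ∀ i, X i) : Measure.pi (fun i => dirac (x i)) = dirac x := by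
  have h := pi_map_pi (μ := fun i => dirac (x i)) (f := fun i _ => x i)
    fun _ => aemeasurable_const
  simpa [map_const] using h.symm

end MeasureTheory.Measure

namespace ProbabilityTheory

variable {ι : Type*} [Fintype ι]

theorem pi_gaussianReal_map_const_add (m c : ι → ℝ) (v : ℝ≥0) :
    (Measure.pi fun i => gaussianReal (m i) v).map (c + ·) =
      Measure.pi fun i => gaussianReal (m i + c i) v := by
  have h := Measure.pi_map_pi (μ := fun i => gaussianReal (m i) v) (f := fun i x => c i + x)
    fun _ => by fun_prop
  simp only [gaussianReal_map_const_add] at h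
  exact h

theorem pi_gaussianReal_map_const_smul (m : ι → ℝ) (v : ℝ≥0) (a : ℝ) :
    (Measure.pi fun i => gaussianReal (m i) v).map (a • ·) =
      Measure.pi fun i => gaussianReal (a * m i) (.mk (a ^ 2) (sq_nonneg _) * v) := by
  have h := Measure.pi_map_pi (μ := fun i => gaussianReal (m i) v) (f := fun _ x => a * x)
    fun _ => by fun_prop
  simp only [gaussianReal_map_const_mul] at h
  exact h

theorem pi_gaussianReal_conv_pi_gaussianReal (m₁ m₂ : ι → ℝ) (v₁ v₂ : ℝ≥0) :
    (Measure.pi fun i => gaussianReal (m₁ i) v₁) ∗ (Measure.pi fun i => gaussianReal (m₂ i) v₂) =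
      Measure.pi fun i => gaussianReal (m₁ i + m₂ i) (v₁ + v₂) := by
  simp_rw [Measure.pi_conv_pi, gaussianReal_conv_gaussianReal]

variable {Ω : Type*} [MeasurableSpace Ω] {P : Measure Ω}

theorem IndepFun.pi_gaussianReal_const_add_smul_add_smul {U W : Ω → ι → ℝ} {m : ι → ℝ} {v : ℝ}
    (hv : 0 ≤ v) (hU : HasLaw U (Measure.pi fun i => gaussianReal (m i) v.toNNReal) P)
    (hW : HasLaw W (Measure.pi fun _ => gaussianReal 0 1) P) (hUW : U ⟂ᵢ[P] W)
    (c : ι → ℝ) (a s : ℝ) :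
    HasLaw (fun ω => c + a • U ω + s • W ω)
      (Measure.pi fun i => gaussianReal ((c + a • m) i) (a ^ 2 * v + s ^ 2).toNNReal) P := by
  have haU := HasLaw.comp ⟨by fun_prop, pi_gaussianReal_map_const_smul m _ a⟩ hU
  have hsW := HasLaw.comp ⟨by fun_prop, pi_gaussianReal_map_const_smul _ 1 s⟩ hW
  have hsum := (hUW.comp (measurable_const_smul a) (measurable_const_smul s)).hasLaw_add haU hsW
  rw [pi_gaussianReal_conv_pi_gaussianReal] at hsum
  have := HasLaw.comp ⟨by fun_prop, pi_gaussianReal_map_const_add _ c _⟩ hsum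
  convert this using 4 with ω i
  · exact add_assoc _ _ _
  · simp [add_comm]
  · apply NNReal.eq
    simp [Real.coe_toNNReal _ (by positivity : 0 ≤ a ^ 2 * v + s ^ 2), hv]

theorem hasLaw_pi_gaussianReal_of_affine_recursion [IsProbabilityMeasure P] {k : ℕ}
    {Z : Fin k → Ω → ι → ℝ} (hZmeas : ∀ j, Measurable (Z j)) (hZindep : iIndepFun Z P)
    (hZlaw : ∀ j, P.map (Z j) = Measure.pi fun _ => gaussianReal 0 1)
    {Y : ℕ → Ω → ι → ℝ} {c : ℕ → ι → ℝ} {a s : ℕ → ℝ}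
    (hY : ∀ j : Fin k, Y (j + 1) = fun ω => c j + a j • Y j ω + s j • Z j ω)
    {μ : ℕ → ι → ℝ} {v : ℕ → ℝ} (hY0 : Y 0 = fun _ => μ 0) (hv0 : v 0 = 0)
    (hμ : ∀ j < k, μ (j + 1) = c j + a j • μ j) (hv : ∀ j < k, v (j + 1) = a j ^ 2 * v j + s j ^ 2)
    {m : ℕ} (hm : m ≤ k) :
    HasLaw (Y m) (Measure.pi fun i => gaussianReal (μ m i) (v m).toNNReal) P := by
  let 𝓕 : ℕ → MeasurableSpace Ω := fun m =>
    ⨆ j ∈ {j : Fin k | (j : ℕ) < m}, MeasurableSpace.comap (Z j) inferInstance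
  suffices ∀ m ≤ k, Measurable[𝓕 m] (Y m) ∧ 0 ≤ v m ∧
      HasLaw (Y m) (Measure.pi fun i => gaussianReal (μ m i) (v m).toNNReal) P from
    (this m hm).2.2
  intro m
  induction m with
  | zero =>
    intro _
    refine ⟨hY0 ▸ measurable_const, hv0.ge, ?_⟩
    simpa [hY0, hv0, gaussianReal_zero_var, Measure.pi_dirac] using
      hasLaw_dirac_of_ae_eq (P := P) (x := μ 0) (.of_forall fun _ => rfl)
  | succ m ih =>
    intro hm
    obtain ⟨hYmeas, hv_nonneg, hlaw⟩ := ih (by omega)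
    let j : Fin k := ⟨m, hm⟩
    have hYmeas' : Measurable[𝓕 (m + 1)] (Y m) :=
      hYmeas.mono (biSup_mono fun i (hi : (i : ℕ) < m) => show (i : ℕ) < m + 1 by omega) le_rfl
    have hZj : Measurable[𝓕 (m + 1)] (Z j) :=
      .of_comap_le (le_biSup (fun i => MeasurableSpace.comap (Z i) inferInstance)
        (show j ∈ {i : Fin k | (i : ℕ) < m + 1} by simp [j]))
    have hindep : Y m ⟂ᵢ[P] Z j := by
      have hpast := indep_iSup_of_disjoint (fun j => (hZmeas j).comap_le) hZindep.iIndep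
        (S := {i : Fin k | (i : ℕ) < m}) (T := {j}) (by simp [j])
      rw [IndepFun_iff_Indep]
      exact indep_of_indep_of_le_right (indep_of_indep_of_le_left hpast hYmeas.comap_le)
        (le_biSup (fun i => MeasurableSpace.comap (Z i) inferInstance) rfl)
    rw [hY j, hμ m hm, hv m hm]
    exact ⟨by fun_prop, by positivity, hindep.pi_gaussianReal_const_add_smul_add_smul hv_nonneg
      hlaw ⟨(hZmeas j).aemeasurable, hZlaw j⟩ _ _ _⟩

end ProbabilityTheory

section Schedule

variable {T : ℕ} {β ᾱ : ℕ → ℝ} (hβ : ∀ s, 1 ≤ s → s ≤ T → 0 < β s ∧ β s < 1)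
  (hᾱ : ∀ s, ᾱ s = ∏ n ∈ Icc 1 s, (1 - β n))
include hβ hᾱ

theorem alphaBar_mem_Icc {s : ℕ} (hs : s ≤ T) : ᾱ s ∈ Set.Icc 0 1 := by
  have hα : ∀ n ∈ Icc 1 s, 0 ≤ 1 - β n ∧ 1 - β n ≤ 1 := fun n hn => by
    have := hβ n (mem_Icc.1 hn).1 ((mem_Icc.1 hn).2.trans hs)
    constructor <;> linarith
  rw [hᾱ]
  exact ⟨prod_nonneg fun n hn => (hα n hn).1,
    prod_le_one (fun n hn => (hα n hn).1) fun n hn => (hα n hn).2⟩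

theorem alphaBar_lt_one {s : ℕ} (hs₁ : 1 ≤ s) (hs : s ≤ T) : ᾱ s < 1 := by
  obtain ⟨r, rfl⟩ := Nat.exists_eq_add_of_le' hs₁
  have hβs := hβ (r + 1) hs₁ hs
  have hprev := alphaBar_mem_Icc hβ hᾱ (s := r) (by omega)
  rw [hᾱ, prod_Icc_succ_top (by omega), ← hᾱ]
  nlinarith [hprev.1, hprev.2]

theorem sigma2_nonneg {σ2 : ℕ → ℝ} (hσ2 : ∀ s, σ2 s = (1 - ᾱ (s - 1)) / (1 - ᾱ s) * β s)
    {s : ℕ} (hs₁ : 1 ≤ s) (hs : s ≤ T) : 0 ≤ σ2 s := by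
  have hprev := alphaBar_mem_Icc hβ hᾱ (s := s - 1) (by omega)
  have hcur := alphaBar_lt_one hβ hᾱ hs₁ hs
  rw [hσ2]
  exact mul_nonneg (div_nonneg (by linarith [hprev.2]) (by linarith)) (hβ s hs₁ hs).1.le

theorem Gamma_diag_mul {Γ : ℕ → ℕ → ℝ} (hΓ : ∀ i j, Γ i j =
      if j ≤ i then Real.sqrt (∏ n ∈ Icc j i, (1 - β n)) * (1 - ᾱ (j - 1)) / (1 - ᾱ i) else 1)
    {i j : ℕ} (hj : 1 ≤ j) (hji : j ≤ i) (hi : i ≤ T) :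
    Γ j j * Γ i (j + 1) = Γ i j := by
  rcases hji.eq_or_lt with rfl | hlt
  · rw [hΓ j (j + 1), if_neg (by omega), mul_one]
  have hαj : 0 ≤ 1 - β j := by linarith [(hβ j hj (by omega)).2]
  have hᾱj : 1 - ᾱ j ≠ 0 := by linarith [alphaBar_lt_one hβ hᾱ hj (by omega)]
  rw [hΓ j j, if_pos le_rfl, hΓ i (j + 1), if_pos (show j + 1 ≤ i from hlt), hΓ i j,
    if_pos hji, Icc_self, prod_singleton, Icc_add_one_left_eq_Ioc,
    ← mul_prod_Ioc_eq_prod_Icc hji, Real.sqrt_mul hαj,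
    Nat.add_sub_cancel]
  field_simp

end Schedule

noncomputable def reverseMean {E : Type*} [AddCommGroup E] [Module ℝ E] (Γ : ℕ → ℕ → ℝ)
    (γ : ℕ → ℝ) (t : ℕ) (x0 xt : E) (m : ℕ) : E :=
  (∑ i ∈ range m, Γ (t - i - 1) (t - m + 1) * γ (t - i)) • x0 + Γ t (t - m + 1) • xt

noncomputable def reverseVariance (Γ : ℕ → ℕ → ℝ) (σ2 : ℕ → ℝ) (t m : ℕ) : ℝ :=
  ∑ i ∈ range m, Γ (t - i - 1) (t - m + 1) ^ 2 * σ2 (t - i)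

section Cocycle

variable {Γ : ℕ → ℕ → ℝ} {T t m : ℕ}
  (hmul : ∀ i j, 1 ≤ j → j ≤ i → i ≤ T → Γ j j * Γ i (j + 1) = Γ i j)
  (hone : ∀ i j, i < j → Γ i j = 1)
include hmul hone

theorem sum_range_succ_Gamma_pow_mul (hm : m < t) (ht : t ≤ T) (p : ℕ) (f : ℕ → ℝ) :
    ∑ i ∈ range (m + 1), Γ (t - i - 1) (t - (m + 1) + 1) ^ p * f (t - i) =
      f (t - m) +
        Γ (t - m) (t - m) ^ p * ∑ i ∈ range m, Γ (t - i - 1) (t - m + 1) ^ p * f (t - i) := by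
  rw [show t - (m + 1) + 1 = t - m by omega, sum_range_succ, hone (t - m - 1) (t - m) (by omega),
    one_pow, one_mul, add_comm, mul_sum]
  congr 1
  refine sum_congr rfl fun i hi => ?_
  rw [← mul_assoc, ← mul_pow, hmul _ _ (by omega) (by have := mem_range.1 hi; omega) (by omega)]

theorem reverseMean_succ {E : Type*} [AddCommGroup E] [Module ℝ E] (γ : ℕ → ℝ) (x0 xt : E)
    (hm : m < t) (ht : t ≤ T) :
    reverseMean Γ γ t x0 xt (m + 1) =
      γ (t - m) • x0 + Γ (t - m) (t - m) • reverseMean Γ γ t x0 xt m := by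
  have hsum := sum_range_succ_Gamma_pow_mul hmul hone hm ht 1 γ
  simp only [pow_one] at hsum
  have hlast : Γ t (t - (m + 1) + 1) = Γ (t - m) (t - m) * Γ t (t - m + 1) := by
    rw [show t - (m + 1) + 1 = t - m by omega, hmul _ _ (by omega) (by omega) ht]
  rw [reverseMean, reverseMean, hsum, hlast]
  module

theorem reverseVariance_succ (σ2 : ℕ → ℝ) (hm : m < t) (ht : t ≤ T) :
    reverseVariance Γ σ2 t (m + 1) =
      Γ (t - m) (t - m) ^ 2 * reverseVariance Γ σ2 t m + σ2 (t - m) := by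
  rw [reverseVariance, reverseVariance, sum_range_succ_Gamma_pow_mul hmul hone hm ht]
  ring

end Cocycle

theorem k_step_reverse_transition_general
    (T : ℕ) (β : ℕ → ℝ) (hβ : ∀ s, 1 ≤ s → s ≤ T → 0 < β s ∧ β s < 1)
    (ᾱ γ σ2 : ℕ → ℝ) (Γ : ℕ → ℕ → ℝ)
    (hᾱ : ∀ s, ᾱ s = ∏ n ∈ Finset.Icc 1 s, (1 - β n))
    (hσ2 : ∀ s, σ2 s = (1 - ᾱ (s - 1)) / (1 - ᾱ s) * β s)
    (hΓ : ∀ i j, Γ i j =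
      if j ≤ i then Real.sqrt (∏ n ∈ Finset.Icc j i, (1 - β n)) * (1 - ᾱ (j - 1)) / (1 - ᾱ i)
      else 1)
    (N : ℕ)
    (t k : ℕ) (hkt : k + 1 ≤ t) (htT : t ≤ T)
    (x0 xt : Fin N → ℝ)
    (Ω : Type*) [MeasurableSpace Ω] (P : Measure Ω) [IsProbabilityMeasure P]
    (Z : Fin k → Ω → (Fin N → ℝ))
    (hZmeas : ∀ j, Measurable (Z j))
    (hZindep : iIndepFun Z P)
    (hZlaw : ∀ j, Measure.map (Z j) P = Measure.pi fun _ : Fin N => gaussianReal 0 1)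
    (X : ℕ → Ω → (Fin N → ℝ))
    (hXt : X t = fun _ => xt)
    (hXstep : ∀ j : Fin k,
      X (t - (j : ℕ) - 1) = fun ω =>
        γ (t - (j : ℕ)) • x0 + Γ (t - (j : ℕ)) (t - (j : ℕ)) • X (t - (j : ℕ)) ω
          + Real.sqrt (σ2 (t - (j : ℕ))) • Z j ω) :
    Measure.map (X (t - k)) P =
      Measure.pi fun i : Fin N =>
        gaussianReal
          (((∑ i' ∈ Finset.range k, Γ (t - i' - 1) (t - k + 1) * γ (t - i')) • x0
              + Γ t (t - k + 1) • xt) i)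
          (Real.toNNReal
            (∑ i' ∈ Finset.range k, (Γ (t - i' - 1) (t - k + 1)) ^ 2 * σ2 (t - i'))) := by
  have hmul : ∀ i j, 1 ≤ j → j ≤ i → i ≤ T → Γ j j * Γ i (j + 1) = Γ i j :=
    fun _ _ => Gamma_diag_mul hβ hᾱ hΓ
  have hone : ∀ i j, i < j → Γ i j = 1 := fun i j h => by rw [hΓ, if_neg (not_le.2 h)]
  refine (hasLaw_pi_gaussianReal_of_affine_recursion (Y := fun j => X (t - j))
    (c := fun j => γ (t - j) • x0) (a := fun j => Γ (t - j) (t - j))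
    (s := fun j => Real.sqrt (σ2 (t - j))) (μ := reverseMean Γ γ t x0 xt)
    (v := reverseVariance Γ σ2 t) hZmeas hZindep hZlaw ?_ ?_ ?_ ?_ ?_ le_rfl).map_eq
  · intro j
    simpa [Nat.sub_sub] using hXstep j
  · simp [hXt, reverseMean, hone t (t + 1) (by omega)]
  · simp [reverseVariance]
  · intro j hj
    exact reverseMean_succ hmul hone γ x0 xt (by omega) htT
  · intro j hj
    rw [reverseVariance_succ hmul hone σ2 (by omega) htT,
      Real.sq_sqrt (sigma2_nonneg hβ hᾱ hσ2 (by omega) (by omega))]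

/-- **Lemma 2 (k-fold composition of DDPM reverse transitions).**
With the noise schedule `β_1, …, β_T ∈ (0,1)`, `α_t = 1 − β_t`, `ᾱ_t = ∏_{s≤t} α_s`,
`γ_t = √ᾱ_{t−1} β_t/(1−ᾱ_t)`, `σ_t² = ((1−ᾱ_{t−1})/(1−ᾱ_t)) β_t` and
`Γ_i^j = √(∏_{n=j}^i α_n)·(1−ᾱ_{j−1})/(1−ᾱ_i)` for `i ≥ j` (`Γ_i^j = 1` for `i < j`):
if `X_t = x_t` and `X_{s−1} = γ_s x_0 + Γ_s^s X_s + σ_s Z_s` for independent standard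
Gaussian vectors `Z_t, …, Z_{t−k+1}` in `ℝ^N`, then `X_{t−k} ~ N(μ_{t,k}, σ²_{t,k} I_N)`
with `μ_{t,k} = (Σ_{i<k} Γ_{t−i−1}^{t−k+1} γ_{t−i}) x_0 + Γ_t^{t−k+1} x_t` and
`σ²_{t,k} = Σ_{i<k} (Γ_{t−i−1}^{t−k+1})² σ²_{t−i}`. -/
theorem k_step_reverse_transition
    (T : ℕ) (hT : 1 ≤ T) (β : ℕ → ℝ) (hβ : ∀ s, 1 ≤ s → s ≤ T → 0 < β s ∧ β s < 1)
    (ᾱ γ σ2 : ℕ → ℝ) (Γ : ℕ → ℕ → ℝ)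
    (hᾱ : ∀ s, ᾱ s = ∏ n ∈ Finset.Icc 1 s, (1 - β n))
    (hγ : ∀ s, γ s = Real.sqrt (ᾱ (s - 1)) * β s / (1 - ᾱ s))
    (hσ2 : ∀ s, σ2 s = (1 - ᾱ (s - 1)) / (1 - ᾱ s) * β s)
    (hΓ : ∀ i j, Γ i j =
      if j ≤ i then Real.sqrt (∏ n ∈ Finset.Icc j i, (1 - β n)) * (1 - ᾱ (j - 1)) / (1 - ᾱ i)
      else 1)
    (N : ℕ) (hN : 1 ≤ N)
    (t k : ℕ) (hk : 1 ≤ k) (hkt : k + 1 ≤ t) (htT : t ≤ T)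
    (x0 xt : Fin N → ℝ)
    (Ω : Type*) [MeasurableSpace Ω] (P : Measure Ω) [IsProbabilityMeasure P]
    (Z : Fin k → Ω → (Fin N → ℝ))
    (hZmeas : ∀ j, Measurable (Z j))
    (hZindep : iIndepFun Z P)
    (hZlaw : ∀ j, Measure.map (Z j) P = Measure.pi fun _ : Fin N => gaussianReal 0 1)
    (X : ℕ → Ω → (Fin N → ℝ))
    (hXt : X t = fun _ => xt)
    (hXstep : ∀ j : Fin k,
      X (t - (j : ℕ) - 1) = fun ω =>
        γ (t - (j : ℕ)) • x0 + Γ (t - (j : ℕ)) (t - (j : ℕ)) • X (t - (j : ℕ)) ω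
          + Real.sqrt (σ2 (t - (j : ℕ))) • Z j ω) :
    Measure.map (X (t - k)) P =
      Measure.pi fun i : Fin N =>
        gaussianReal
          (((∑ i' ∈ Finset.range k, Γ (t - i' - 1) (t - k + 1) * γ (t - i')) • x0
              + Γ t (t - k + 1) • xt) i)
          (Real.toNNReal
            (∑ i' ∈ Finset.range k, (Γ (t - i' - 1) (t - k + 1)) ^ 2 * σ2 (t - i'))) :=
  k_step_reverse_transition_general T β hβ ᾱ γ σ2 Γ hᾱ hσ2 hΓ N t k hkt htT x0 xt Ω P Z hZmeas
    hZindep hZlaw X hXt hXstep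
end

section
/- Fix a noise schedule as in the context. Then for all integers t, k with k ≥ 1, t ≤ T and t − k ≥ 1, the following recursion for the variance coefficients holds: (Γ_{t−k}^{t−k})² · (Σ_{i=0}^{k−1} (Γ_{t−i−1}^{t−k+1})² σ²_{t−i}) + σ²_{t−k} = Σ_{i=0}^{k} (Γ_{t−i−1}^{t−k})² σ²_{t−i}. -/
/-!
Write `m = t - k`. The term `i = k` on the right is `(Γ_{m-1}^m)² σ²_m = σ²_m`, and the remaining
terms match those on the left once `(Γ_m^m)² (Γ_a^{m+1})² = (Γ_a^m)²` for `m ≤ a`: the products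
under the square roots concatenate to `∏_{n=m}^a α_n`, and the factor `1 - ᾱ_m` in the
denominator of `Γ_m^m` cancels against the numerator of `Γ_a^{m+1}`.
-/

open Finset

lemma Finset.prod_lt_one_of_mem {ι R : Type*} [CommMonoidWithZero R] [Preorder R]
    [ZeroLEOneClass R] [PosMulMono R] {f : ι → R} {s : Finset ι}
    (h0 : ∀ i ∈ s, 0 ≤ f i) (h1 : ∀ i ∈ s, f i ≤ 1) {j : ι} (hj : j ∈ s) (hj1 : f j < 1) :
    ∏ i ∈ s, f i < 1 := by
  classical
  calc ∏ i ∈ s, f i = f j * ∏ i ∈ s.erase j, f i := (mul_prod_erase s f hj).symm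
    _ ≤ f j * 1 := mul_le_mul_of_nonneg_left
        (prod_le_one (fun i hi ↦ h0 i (mem_of_mem_erase hi))
          (fun i hi ↦ h1 i (mem_of_mem_erase hi))) (h0 j hj)
    _ < 1 := by rwa [mul_one]

/-- The coefficient `Γ_i^j` of the paper, for a schedule `α` and an arbitrary sequence `ᾱ`. -/
noncomputable def gammaCoeff (α ᾱ : ℕ → ℝ) (i j : ℕ) : ℝ :=
  if j ≤ i then Real.sqrt (∏ n ∈ Icc j i, α n) * (1 - ᾱ (j - 1)) / (1 - ᾱ i) else 1

section gammaCoeff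

variable {α ᾱ : ℕ → ℝ}

lemma gammaCoeff_of_lt {i j : ℕ} (h : i < j) : gammaCoeff α ᾱ i j = 1 :=
  if_neg h.not_ge

lemma gammaCoeff_sq {i j : ℕ} (hji : j ≤ i) (hα : ∀ n ∈ Icc j i, 0 ≤ α n) :
    gammaCoeff α ᾱ i j ^ 2 = (∏ n ∈ Icc j i, α n) * ((1 - ᾱ (j - 1)) / (1 - ᾱ i)) ^ 2 := by
  rw [gammaCoeff, if_pos hji, mul_div_assoc, mul_pow, Real.sq_sqrt (prod_nonneg hα)]

lemma gammaCoeff_self_sq_mul_gammaCoeff_succ_sq {m a : ℕ} (hma : m ≤ a)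
    (hα : ∀ n ∈ Icc m a, 0 ≤ α n) (hᾱ : ᾱ m ≠ 1) :
    gammaCoeff α ᾱ m m ^ 2 * gammaCoeff α ᾱ a (m + 1) ^ 2 = gammaCoeff α ᾱ a m ^ 2 := by
  obtain rfl | hma := hma.eq_or_lt
  · rw [gammaCoeff_of_lt m.lt_succ_self, one_pow, mul_one]
  have hsplit : ∏ n ∈ Icc m a, α n = α m * ∏ n ∈ Icc (m + 1) a, α n := by
    rw [Icc_add_one_left_eq_Ioc, mul_prod_Ioc_eq_prod_Icc hma.le]
  have hne : 1 - ᾱ m ≠ 0 := sub_ne_zero.2 (Ne.symm hᾱ)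
  rw [gammaCoeff_sq le_rfl (fun n hn ↦ hα n (Icc_subset_Icc le_rfl hma.le hn)),
    gammaCoeff_sq (j := m + 1) hma
      (fun n hn ↦ hα n (Icc_subset_Icc (m.le_add_right 1) le_rfl hn)),
    gammaCoeff_sq hma.le hα, hsplit, Icc_self, prod_singleton, Nat.add_sub_cancel]
  field_simp

end gammaCoeff

theorem variance_coefficient_recursion_general
    (T : ℕ) (β : ℕ → ℝ) (hβ : ∀ s, 1 ≤ s → s ≤ T → 0 < β s ∧ β s < 1)
    (ᾱ σ2 : ℕ → ℝ) (Γ : ℕ → ℕ → ℝ)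
    (hᾱ : ∀ s, ᾱ s = ∏ n ∈ Finset.Icc 1 s, (1 - β n))
    (hΓ : ∀ i j, Γ i j =
      if j ≤ i then Real.sqrt (∏ n ∈ Finset.Icc j i, (1 - β n)) * (1 - ᾱ (j - 1)) / (1 - ᾱ i)
      else 1) :
    ∀ t k : ℕ, 1 ≤ k → t ≤ T → k + 1 ≤ t →
      (Γ (t - k) (t - k)) ^ 2
            * (∑ i ∈ Finset.range k, (Γ (t - i - 1) (t - k + 1)) ^ 2 * σ2 (t - i))
          + σ2 (t - k)
        = ∑ i ∈ Finset.range (k + 1), (Γ (t - i - 1) (t - k)) ^ 2 * σ2 (t - i) := by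
  obtain rfl : Γ = gammaCoeff (fun n ↦ 1 - β n) ᾱ := funext fun i ↦ funext (hΓ i)
  intro t k _ htT hkt
  have hα : ∀ n ∈ Icc 1 T, 0 ≤ 1 - β n ∧ 1 - β n ≤ 1 := fun n hn ↦ by
    have := hβ n (mem_Icc.1 hn).1 (mem_Icc.1 hn).2
    constructor <;> linarith
  have hᾱ_lt : ᾱ (t - k) < 1 := by
    have hsub : Icc 1 (t - k) ⊆ Icc 1 T := Icc_subset_Icc le_rfl (by omega)
    rw [hᾱ]
    exact prod_lt_one_of_mem (fun n hn ↦ (hα n (hsub hn)).1) (fun n hn ↦ (hα n (hsub hn)).2)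
      (right_mem_Icc.2 (by omega)) (by linarith [(hβ (t - k) (by omega) (by omega)).1])
  rw [sum_range_succ, gammaCoeff_of_lt (Nat.sub_one_lt (by omega : t - k ≠ 0)), one_pow,
    one_mul, mul_sum]
  congr 1
  refine sum_congr rfl fun i hi ↦ ?_
  have hi := mem_range.1 hi
  rw [← mul_assoc, gammaCoeff_self_sq_mul_gammaCoeff_succ_sq (by omega)
    (fun n hn ↦ (hα n (Icc_subset_Icc (by omega) (by omega) hn)).1) hᾱ_lt.ne]

/-- **Recursion for the variance coefficients of the k-step reverse transition.**
With `α_t = 1 − β_t`, `ᾱ_t = ∏_{s≤t} α_s`, `σ_t² = ((1−ᾱ_{t−1})/(1−ᾱ_t)) β_t` and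
`Γ_i^j = √(∏_{n=j}^i α_n)·(1−ᾱ_{j−1})/(1−ᾱ_i)` for `i ≥ j` (`Γ_i^j = 1` for `i < j`),
for all `k ≥ 1`, `t ≤ T`, `t − k ≥ 1`:
`(Γ_{t−k}^{t−k})²·(Σ_{i<k} (Γ_{t−i−1}^{t−k+1})² σ²_{t−i}) + σ²_{t−k}
  = Σ_{i≤k} (Γ_{t−i−1}^{t−k})² σ²_{t−i}`. -/
theorem variance_coefficient_recursion
    (T : ℕ) (hT : 1 ≤ T) (β : ℕ → ℝ) (hβ : ∀ s, 1 ≤ s → s ≤ T → 0 < β s ∧ β s < 1)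
    (ᾱ σ2 : ℕ → ℝ) (Γ : ℕ → ℕ → ℝ)
    (hᾱ : ∀ s, ᾱ s = ∏ n ∈ Finset.Icc 1 s, (1 - β n))
    (hσ2 : ∀ s, σ2 s = (1 - ᾱ (s - 1)) / (1 - ᾱ s) * β s)
    (hΓ : ∀ i j, Γ i j =
      if j ≤ i then Real.sqrt (∏ n ∈ Finset.Icc j i, (1 - β n)) * (1 - ᾱ (j - 1)) / (1 - ᾱ i)
      else 1) :
    ∀ t k : ℕ, 1 ≤ k → t ≤ T → k + 1 ≤ t →
      (Γ (t - k) (t - k)) ^ 2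
            * (∑ i ∈ Finset.range k, (Γ (t - i - 1) (t - k + 1)) ^ 2 * σ2 (t - i))
          + σ2 (t - k)
        = ∑ i ∈ Finset.range (k + 1), (Γ (t - i - 1) (t - k)) ^ 2 * σ2 (t - i) :=
  variance_coefficient_recursion_general T β hβ ᾱ σ2 Γ hᾱ hΓ
end

section
/- Let M, N ≥ 1, let A be a real M × N matrix with operator norm ‖A‖₂ ≤ 1, let 0 ≤ σ_y ≤ 1, and let x_0 ∈ ℝ^N. Let β_t ∈ (0,1) for all integers t ≥ 1 and set ᾱ_t := ∏_{s=1}^t (1 − β_s); assume ᾱ_t → 0 as t → ∞. Let n ~ N(0, σ_y² I_M) and ε ~ N(0, I_N) be independent Gaussian vectors, set y := A x_0 + n and x̃_t := x_0 + √((1 − ᾱ_t)/ᾱ_t) · ε. Then for every w ∈ (0,1) there exists τ ∈ ℕ such that for all t > τ: E‖x_0 − Aᵀ y‖² ≤ E‖x_0 − (w Aᵀ y + (1 − w) x̃_t)‖². -/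
/-!
Write `G = x₀ - Aᵀy` and `s_t = √((1 - ᾱ_t) / ᾱ_t)`. The error of the convex combination is
`w G - (1 - w) s_t ε`, and since `ε` is centred and independent of `G` the cross term has zero
mean, so its mean squared error is `w² E‖G‖² + (1 - w)² s_t² N`. As `ᾱ_t → 0⁺` we get
`s_t → ∞`, so this eventually exceeds `E‖G‖²`.
-/

open MeasureTheory ProbabilityTheory Finset Filter
open scoped NNReal ENNReal Topology

namespace ProbabilityTheory

variable {Ω : Type*} {mΩ : MeasurableSpace Ω} {P : Measure Ω}

lemma HasLaw.eval {ι : Type*} [Fintype ι] {𝓧 : ι → Type*} [∀ i, MeasurableSpace (𝓧 i)]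
    {μ : ∀ i, Measure (𝓧 i)} [∀ i, IsProbabilityMeasure (μ i)] {X : Ω → ∀ i, 𝓧 i}
    (hX : HasLaw X (Measure.pi μ) P) (i : ι) : HasLaw (fun ω ↦ X ω i) (μ i) P :=
  (measurePreserving_eval μ i).fun_comp_hasLaw hX

section Gaussian

variable {X : Ω → ℝ} {m : ℝ} {v : ℝ≥0}

lemma HasLaw.memLp_gaussianReal (hX : HasLaw X (gaussianReal m v) P) {p : ℝ≥0∞} (hp : p ≠ ∞) :
    MemLp X p P := by
  have h : MemLp id p (P.map X) := hX.map_eq ▸ memLp_id_gaussianReal' p hp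
  exact (memLp_map_measure_iff aestronglyMeasurable_id hX.aemeasurable).1 h

lemma HasLaw.integral_gaussianReal (hX : HasLaw X (gaussianReal m v) P) : P[X] = m :=
  hX.integral_eq.trans integral_id_gaussianReal

lemma HasLaw.integral_sq_gaussianReal (hX : HasLaw X (gaussianReal 0 v) P) :
    ∫ ω, X ω ^ 2 ∂P = v := by
  rw [← variance_of_integral_eq_zero hX.aemeasurable hX.integral_gaussianReal, hX.variance_eq,
    variance_id_gaussianReal]

variable {ι : Type*} [Fintype ι] {Y : Ω → ι → ℝ}

lemma HasLaw.memLp_pi_gaussianReal (hY : HasLaw Y (Measure.pi fun _ ↦ gaussianReal m v) P)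
    {p : ℝ≥0∞} (hp : p ≠ ∞) : MemLp Y p P :=
  MemLp.of_eval fun i ↦ (hY.eval i).memLp_gaussianReal hp

lemma HasLaw.integral_eval_pi_gaussianReal
    (hY : HasLaw Y (Measure.pi fun _ ↦ gaussianReal m v) P) (i : ι) : ∫ ω, Y ω i ∂P = m :=
  (hY.eval i).integral_gaussianReal

lemma HasLaw.integral_sum_sq_pi_gaussianReal
    (hY : HasLaw Y (Measure.pi fun _ ↦ gaussianReal 0 v) P) :
    ∫ ω, ∑ i, Y ω i ^ 2 ∂P = Fintype.card ι * v := by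
  rw [integral_finsetSum _ fun i _ ↦ ((hY.eval i).memLp_gaussianReal (by simp)).integrable_sq,
    sum_congr rfl fun i _ ↦ (hY.eval i).integral_sq_gaussianReal]
  simp

end Gaussian

lemma IndepFun.integral_mul_add_mul_sq {X Y : Ω → ℝ} (hXY : IndepFun X Y P) (hX : MemLp X 2 P)
    (hY : MemLp Y 2 P) (hY0 : P[Y] = 0) (a b : ℝ) :
    ∫ ω, (a * X ω + b * Y ω) ^ 2 ∂P = a ^ 2 * ∫ ω, X ω ^ 2 ∂P + b ^ 2 * ∫ ω, Y ω ^ 2 ∂P := by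
  have hXY_int : Integrable (fun ω ↦ X ω * Y ω) P := hX.integrable_mul hY
  have hcross : ∫ ω, X ω * Y ω ∂P = 0 := by
    rw [hXY.integral_fun_mul_eq_mul_integral hX.1 hY.1, hY0, mul_zero]
  have hexpand : (fun ω ↦ (a * X ω + b * Y ω) ^ 2)
      = fun ω ↦ a ^ 2 * X ω ^ 2 + 2 * a * b * (X ω * Y ω) + b ^ 2 * Y ω ^ 2 := by
    ext ω; ring
  rw [hexpand, integral_add ((hX.integrable_sq.const_mul _).fun_add (hXY_int.const_mul _))
    (hY.integrable_sq.const_mul _), integral_add (hX.integrable_sq.const_mul _)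
    (hXY_int.const_mul _), integral_const_mul, integral_const_mul, integral_const_mul, hcross]
  ring

lemma IndepFun.integral_sum_mul_add_mul_sq {ι : Type*} [Fintype ι] {X Y : Ω → ι → ℝ}
    (hXY : IndepFun X Y P) (hX : MemLp X 2 P) (hY : MemLp Y 2 P)
    (hY0 : ∀ i, ∫ ω, Y ω i ∂P = 0) (a b : ℝ) :
    ∫ ω, ∑ i, (a * X ω i + b * Y ω i) ^ 2 ∂P
      = a ^ 2 * ∫ ω, ∑ i, X ω i ^ 2 ∂P + b ^ 2 * ∫ ω, ∑ i, Y ω i ^ 2 ∂P := by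
  have hXi := hX.eval
  have hYi := hY.eval
  rw [integral_finsetSum _ fun i _ ↦ ?_, integral_finsetSum _ fun i _ ↦ (hXi i).integrable_sq,
    integral_finsetSum _ fun i _ ↦ (hYi i).integrable_sq, mul_sum, mul_sum, ← sum_add_distrib]
  · refine sum_congr rfl fun i _ ↦ ?_
    exact (hXY.comp (measurable_pi_apply i) (measurable_pi_apply i)).integral_mul_add_mul_sq
      (hXi i) (hYi i) (hY0 i) a b
  · exact (((hXi i).const_mul a).add ((hYi i).const_mul b)).integrable_sq

end ProbabilityTheory

lemma tendsto_sqrt_one_sub_div_atTop {α : Type*} {l : Filter α} {f : α → ℝ}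
    (hf : Tendsto f l (𝓝[>] 0)) : Tendsto (fun x ↦ √((1 - f x) / f x)) l atTop := by
  refine Real.tendsto_sqrt_atTop.comp ?_
  have hinv : Tendsto (fun x ↦ (f x)⁻¹ - 1) l atTop :=
    tendsto_atTop_add_const_right _ (-1) (tendsto_inv_nhdsGT_zero.comp hf)
  refine hinv.congr' ?_
  filter_upwards [hf self_mem_nhdsWithin] with x hx
  rw [sub_div, div_self (ne_of_gt hx), one_div]

lemma eventually_le_sq_mul_add_sq_mul {α : Type*} {l : Filter α} {s : α → ℝ}
    (hs : Tendsto s l atTop) {V : ℝ} (hV : 0 < V) (a : ℝ) {b : ℝ} (hb : b ≠ 0) (L : ℝ) :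
    ∀ᶠ x in l, L ≤ a ^ 2 * L + (b * s x) ^ 2 * V := by
  have h : Tendsto (fun x ↦ (b * s x) ^ 2 * V) l atTop := by
    simp_rw [mul_pow, mul_comm _ V, ← mul_assoc]
    exact ((tendsto_pow_atTop two_ne_zero).comp hs).const_mul_atTop (by positivity)
  filter_upwards [h.eventually_ge_atTop (L - a ^ 2 * L)] with x hx
  linarith

theorem backprojection_beats_convex_combination_general
    (M N : ℕ) (hN : 1 ≤ N)
    (A : Matrix (Fin M) (Fin N) ℝ)
    (σy : ℝ)
    (x0 : Fin N → ℝ)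
    (β : ℕ → ℝ) (hβ : ∀ t, 1 ≤ t → 0 < β t ∧ β t < 1)
    (ᾱ : ℕ → ℝ) (hᾱ : ∀ t, ᾱ t = ∏ s ∈ Finset.Icc 1 t, (1 - β s))
    (hᾱlim : Tendsto ᾱ atTop (nhds 0))
    (Ω : Type*) [MeasurableSpace Ω] (P : Measure Ω) [IsProbabilityMeasure P]
    (n : Ω → (Fin M → ℝ)) (ε : Ω → (Fin N → ℝ))
    (hnmeas : Measurable n) (hεmeas : Measurable ε)
    (hindep : IndepFun n ε P)
    (hnlaw : Measure.map n P =
      Measure.pi fun _ : Fin M => gaussianReal 0 ⟨σy ^ 2, sq_nonneg _⟩)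
    (hεlaw : Measure.map ε P = Measure.pi fun _ : Fin N => gaussianReal 0 1) :
    ∀ w : ℝ, 0 < w → w < 1 → ∃ τ : ℕ, ∀ t : ℕ, τ < t →
      (∫ ω, ∑ i, (x0 i - A.transpose.mulVec (A.mulVec x0 + n ω) i) ^ 2 ∂P)
        ≤ ∫ ω, ∑ i,
            (x0 i - (w • A.transpose.mulVec (A.mulVec x0 + n ω)
              + (1 - w) • (x0 + Real.sqrt ((1 - ᾱ t) / ᾱ t) • ε ω)) i) ^ 2 ∂P := by
  intro w _ hw1
  have hn : HasLaw n (Measure.pi fun _ ↦ gaussianReal 0 ⟨σy ^ 2, sq_nonneg _⟩) P :=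
    ⟨hnmeas.aemeasurable, hnlaw⟩
  have hε : HasLaw ε _ P := ⟨hεmeas.aemeasurable, hεlaw⟩
  set G : Ω → Fin N → ℝ := fun ω ↦ x0 - A.transpose.mulVec (A.mulVec x0 + n ω) with hG_def
  have hG : MemLp G 2 P :=
    (memLp_const x0).sub (((memLp_const (A.mulVec x0)).add (hn.memLp_pi_gaussianReal (by simp)))
      |>.continuousLinearMap_comp (Matrix.mulVecLin A.transpose).toContinuousLinearMap)
  have hGε : IndepFun G ε P := hindep.comp (φ := fun v ↦ x0 - A.transpose.mulVec (A.mulVec x0 + v))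
    (by fun_prop : Continuous _).measurable measurable_id
  have hᾱpos : ∀ t, 0 < ᾱ t := fun t ↦ (hᾱ t).symm ▸ prod_pos fun s hs ↦
    sub_pos.2 (hβ s (mem_Icc.1 hs).1).2
  have hscale : Tendsto (fun t ↦ √((1 - ᾱ t) / ᾱ t)) atTop atTop :=
    tendsto_sqrt_one_sub_div_atTop (tendsto_nhdsWithin_iff.2 ⟨hᾱlim, .of_forall hᾱpos⟩)
  obtain ⟨τ, hτ⟩ := eventually_atTop.1 (eventually_le_sq_mul_add_sq_mul hscale
    (by exact_mod_cast hN : (0 : ℝ) < N) w (neg_ne_zero.2 (sub_ne_zero.2 hw1.ne'))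
    (∫ ω, ∑ i, G ω i ^ 2 ∂P))
  refine ⟨τ, fun t ht ↦ ?_⟩
  have hsplit : ∀ ω i, x0 i - (w • A.transpose.mulVec (A.mulVec x0 + n ω)
      + (1 - w) • (x0 + √((1 - ᾱ t) / ᾱ t) • ε ω)) i
      = w * G ω i + -(1 - w) * √((1 - ᾱ t) / ᾱ t) * ε ω i := by
    intro ω i
    simp only [hG_def, Pi.add_apply, Pi.sub_apply, Pi.smul_apply, smul_eq_mul]
    ring
  show ∫ ω, ∑ i, G ω i ^ 2 ∂P ≤ _
  simp_rw [hsplit]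
  rw [hGε.integral_sum_mul_add_mul_sq hG (hε.memLp_pi_gaussianReal (by simp))
    hε.integral_eval_pi_gaussianReal, hε.integral_sum_sq_pi_gaussianReal]
  simpa using hτ t ht.le

/-- **Proposition 1.**
Let `y = A x_0 + n` with `n ~ N(0, σ_y² I_M)`, `‖A‖₂ ≤ 1` (expressed as
`Σ (A v)_i² ≤ Σ v_i²` for every `v`), `0 ≤ σ_y ≤ 1`, and let
`x̃_t = x_0 + √((1−ᾱ_t)/ᾱ_t) ε` with `ε ~ N(0, I_N)` independent of `n`, where
`ᾱ_t = ∏_{s≤t}(1−β_s) → 0`. Then for every `w ∈ (0,1)` there is a timestep `τ` such that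
for all `t > τ` the back-projection `Aᵀy` approximates `x_0` at least as well in MSE as the
convex combination `w Aᵀy + (1−w) x̃_t`. -/
theorem backprojection_beats_convex_combination
    (M N : ℕ) (hM : 1 ≤ M) (hN : 1 ≤ N)
    (A : Matrix (Fin M) (Fin N) ℝ)
    (hA : ∀ v : Fin N → ℝ, ∑ i, (A.mulVec v i) ^ 2 ≤ ∑ i, (v i) ^ 2)
    (σy : ℝ) (hσ0 : 0 ≤ σy) (hσ1 : σy ≤ 1)
    (x0 : Fin N → ℝ)
    (β : ℕ → ℝ) (hβ : ∀ t, 1 ≤ t → 0 < β t ∧ β t < 1)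
    (ᾱ : ℕ → ℝ) (hᾱ : ∀ t, ᾱ t = ∏ s ∈ Finset.Icc 1 t, (1 - β s))
    (hᾱlim : Tendsto ᾱ atTop (nhds 0))
    (Ω : Type*) [MeasurableSpace Ω] (P : Measure Ω) [IsProbabilityMeasure P]
    (n : Ω → (Fin M → ℝ)) (ε : Ω → (Fin N → ℝ))
    (hnmeas : Measurable n) (hεmeas : Measurable ε)
    (hindep : IndepFun n ε P)
    (hnlaw : Measure.map n P =
      Measure.pi fun _ : Fin M => gaussianReal 0 ⟨σy ^ 2, sq_nonneg _⟩)
    (hεlaw : Measure.map ε P = Measure.pi fun _ : Fin N => gaussianReal 0 1) :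
    ∀ w : ℝ, 0 < w → w < 1 → ∃ τ : ℕ, ∀ t : ℕ, τ < t →
      (∫ ω, ∑ i, (x0 i - A.transpose.mulVec (A.mulVec x0 + n ω) i) ^ 2 ∂P)
        ≤ ∫ ω, ∑ i,
            (x0 i - (w • A.transpose.mulVec (A.mulVec x0 + n ω)
              + (1 - w) • (x0 + Real.sqrt ((1 - ᾱ t) / ᾱ t) • ε ω)) i) ^ 2 ∂P :=
  backprojection_beats_convex_combination_general M N hN A σy x0 β hβ ᾱ hᾱ hᾱlim Ω P n ε hnmeas
    hεmeas hindep hnlaw hεlaw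
end

section
/- Let M, N ≥ 1, let A be a real M × N matrix, let x_0 ∈ ℝ^N, let σ_y ≥ 0, σ̃ ≥ 0 and w ∈ ℝ. Let n ~ N(0, σ_y² I_M) and ε ~ N(0, I_N) be independent Gaussian vectors, and set y := A x_0 + n and x̃ := x_0 + σ̃ ε. Then E‖x_0 − (w Aᵀ y + (1 − w) x̃)‖² = w² (‖(I_N − Aᵀ A) x_0‖² + σ_y² ‖A‖_F²) + (1 − w)² σ̃² N. -/
/-! The `i`-th coordinate of the error `x₀ - (w Aᵀy + (1 - w) x̃)` is the constant
`w (x₀ - AᵀA x₀)_i` minus the linear form `w (Aᵀn)_i` in `n` minus `(1 - w) σ̃ ε_i`. Its second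
moment is its squared mean plus its variance, and the variance splits over the independent noises
and then over their independent coordinates, giving `w² σ_y² ∑_j A_ji² + (1 - w)² σ̃²`. -/

open MeasureTheory ProbabilityTheory Finset

lemma integral_sq_eq_variance_add_sq {Ω : Type*} {mΩ : MeasurableSpace Ω} {μ : Measure Ω}
    [IsProbabilityMeasure μ] {X : Ω → ℝ} (hX : MemLp X 2 μ) :
    ∫ ω, X ω ^ 2 ∂μ = Var[X; μ] + μ[X] ^ 2 := by
  rw [variance_eq_sub hX]
  simp only [Pi.pow_apply, sub_add_cancel]

section Prod
variable {Ω Ω' : Type*} {mΩ : MeasurableSpace Ω} {mΩ' : MeasurableSpace Ω'}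
  {μ : Measure Ω} {ν : Measure Ω'} [IsProbabilityMeasure μ] [IsProbabilityMeasure ν]

lemma memLp_const_sub_sub_prod {X : Ω → ℝ} {Y : Ω' → ℝ} (hX : MemLp X 2 μ) (hY : MemLp Y 2 ν)
    (c : ℝ) : MemLp (fun p : Ω × Ω' => c - X p.1 - Y p.2) 2 (μ.prod ν) :=
  ((memLp_const c).sub (hX.comp_fst ν)).sub (hY.comp_snd μ)

lemma integral_sq_sub_sub_prod {X : Ω → ℝ} {Y : Ω' → ℝ} (hX : MemLp X 2 μ) (hY : MemLp Y 2 ν)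
    (c : ℝ) :
    ∫ p, (c - X p.1 - Y p.2) ^ 2 ∂(μ.prod ν) = (c - μ[X] - ν[Y]) ^ 2 + Var[X; μ] + Var[Y; ν] := by
  have hvar : Var[fun p : Ω × Ω' => c - X p.1 - Y p.2; μ.prod ν] = Var[X; μ] + Var[Y; ν] := by
    simp_rw [sub_sub]
    rw [variance_const_sub (X := fun p : Ω × Ω' => X p.1 + Y p.2)
      ((hX.comp_fst ν).add (hY.comp_snd μ)).aestronglyMeasurable, variance_add_prod hX hY]
  have hX₁ : Integrable (fun p : Ω × Ω' => c - X p.1) (μ.prod ν) :=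
    (integrable_const c).sub ((hX.comp_fst ν).integrable one_le_two)
  have hmean : ∫ p, (c - X p.1 - Y p.2) ∂(μ.prod ν) = c - μ[X] - ν[Y] := by
    rw [integral_sub hX₁ ((hY.comp_snd μ).integrable one_le_two),
      integral_sub (integrable_const c) ((hX.comp_fst ν).integrable one_le_two),
      integral_fun_fst, integral_fun_snd]
    simp
  rw [integral_sq_eq_variance_add_sq (memLp_const_sub_sub_prod hX hY c), hvar, hmean]
  ring

lemma integral_sum_sq_sub_sub_prod {ι : Type*} (s : Finset ι) {X : ι → Ω → ℝ} {Y : ι → Ω' → ℝ}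
    (hX : ∀ i ∈ s, MemLp (X i) 2 μ) (hY : ∀ i ∈ s, MemLp (Y i) 2 ν) (c : ι → ℝ) :
    ∫ p, ∑ i ∈ s, (c i - X i p.1 - Y i p.2) ^ 2 ∂(μ.prod ν)
      = ∑ i ∈ s, ((c i - μ[X i] - ν[Y i]) ^ 2 + Var[X i; μ] + Var[Y i; ν]) := by
  rw [integral_finsetSum s fun i hi =>
    (memLp_const_sub_sub_prod (hX i hi) (hY i hi) (c i)).integrable_sq]
  exact sum_congr rfl fun i hi => integral_sq_sub_sub_prod (hX i hi) (hY i hi) (c i)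

end Prod

section Pi
variable {ι : Type*} [Fintype ι] {μ : ι → Measure ℝ} [∀ i, IsProbabilityMeasure (μ i)]

lemma memLp_dotProduct_pi (h : ∀ i, MemLp id 2 (μ i)) (a : ι → ℝ) :
    MemLp (fun x => a ⬝ᵥ x) 2 (Measure.pi μ) :=
  memLp_finsetSum _ fun i _ =>
    ((h i).comp_measurePreserving (measurePreserving_eval μ i)).const_mul (a i)

lemma integral_dotProduct_pi (h : ∀ i, Integrable id (μ i)) (a : ι → ℝ) :
    ∫ x, a ⬝ᵥ x ∂(Measure.pi μ) = ∑ i, a i * ∫ t, t ∂(μ i) := by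
  rw [show (fun x => a ⬝ᵥ x) = fun x => ∑ i, a i * x i from rfl,
    integral_finsetSum _ fun i _ => (integrable_eval (h i)).const_mul (a i)]
  simp_rw [integral_const_mul, integral_eval]

lemma variance_dotProduct_pi (h : ∀ i, MemLp id 2 (μ i)) (a : ι → ℝ) :
    Var[fun x => a ⬝ᵥ x; Measure.pi μ] = ∑ i, a i ^ 2 * Var[id; μ i] := by
  have hsum : (fun x => a ⬝ᵥ x) = ∑ i, fun x : ι → ℝ => a i * x i := by
    ext x; simp only [dotProduct, Finset.sum_apply]
  rw [hsum, variance_sum_pi (X := fun i t => a i * t) fun i => (h i).const_mul (a i)]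
  exact sum_congr rfl fun i _ => variance_const_mul (a i) id (μ i)

end Pi

lemma sub_fused_estimate_apply {m n : Type*} [Fintype m] [Fintype n] [DecidableEq n]
    (A : Matrix m n ℝ) (x0 : n → ℝ) (u : m → ℝ) (e : n → ℝ) (σ w : ℝ) (i : n) :
    x0 i - (w • A.transpose.mulVec (A.mulVec x0 + u) + (1 - w) • (x0 + σ • e)) i
      = w * (x0 i - A.transpose.mulVec (A.mulVec x0) i) - (w • A.transpose i) ⬝ᵥ u
        - Pi.single i ((1 - w) * σ) ⬝ᵥ e := by
  simp only [Matrix.mulVec_add, Pi.add_apply, Pi.smul_apply, smul_eq_mul, single_dotProduct,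
    smul_dotProduct]
  rw [show A.transpose.mulVec u i = A.transpose i ⬝ᵥ u from rfl]
  ring

theorem fused_estimate_mse_general
    (M N : ℕ)
    (A : Matrix (Fin M) (Fin N) ℝ) (x0 : Fin N → ℝ)
    (σy : ℝ) (σt : ℝ) (w : ℝ) :
    (∫ p : (Fin M → ℝ) × (Fin N → ℝ),
        ∑ i, (x0 i - (w • A.transpose.mulVec (A.mulVec x0 + p.1)
            + (1 - w) • (x0 + σt • p.2)) i) ^ 2
        ∂((Measure.pi fun _ : Fin M => gaussianReal 0 ⟨σy ^ 2, sq_nonneg _⟩).prod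
            (Measure.pi fun _ : Fin N => gaussianReal 0 1)))
      = w ^ 2 * ((∑ i, (x0 i - A.transpose.mulVec (A.mulVec x0) i) ^ 2)
            + σy ^ 2 * ∑ i, ∑ j, (A i j) ^ 2)
        + (1 - w) ^ 2 * σt ^ 2 * N := by
  -- the anonymous constructor in the statement is elaborated at a `Subtype`, not at `ℝ≥0`,
  -- so the Gaussian lemmas only rewrite once it is named
  set V : NNReal := ⟨σy ^ 2, sq_nonneg _⟩
  have hV : (V : ℝ) = σy ^ 2 := rfl
  have hgauss : ∀ v, MemLp id 2 (gaussianReal 0 v) := fun v => memLp_id_gaussianReal 2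
  simp_rw [sub_fused_estimate_apply]
  refine (integral_sum_sq_sub_sub_prod (X := fun i x => (w • A.transpose i) ⬝ᵥ x)
    (Y := fun i y => Pi.single i ((1 - w) * σt) ⬝ᵥ y) _
    (fun i _ => memLp_dotProduct_pi (fun _ => hgauss _) _)
    (fun i _ => memLp_dotProduct_pi (fun _ => hgauss _) _) _).trans ?_
  simp only [integral_dotProduct_pi (fun _ => (hgauss _).integrable one_le_two),
    variance_dotProduct_pi (fun _ => hgauss _), integral_id_gaussianReal, variance_id_gaussianReal]
  have hcard : (1 - w) ^ 2 * σt ^ 2 * (N : ℝ) = ∑ _ : Fin N, ((1 - w) * σt) ^ 2 := by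
    simp only [sum_const, card_univ, Fintype.card_fin, nsmul_eq_mul]; ring
  rw [hcard, sum_comm (f := fun i j => A i j ^ 2)]
  simp only [mul_add, mul_sum, ← sum_add_distrib]
  refine sum_congr rfl fun i _ => ?_
  simp only [Pi.smul_apply, Matrix.transpose_apply, smul_eq_mul, mul_zero, sum_const_zero,
    sub_zero, Pi.single_apply, ite_pow, zero_pow two_ne_zero, sum_ite_eq', mem_univ, if_true,
    NNReal.coe_one, mul_one, hV, mul_pow, add_left_inj, add_right_inj]
  exact sum_congr rfl fun j _ => by ring

/-- **MSE of the fused estimate (the quantity `I₂`).**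
If `y = A x_0 + n` with `n ~ N(0, σ_y² I_M)` and `x̃ = x_0 + σ̃ ε` with `ε ~ N(0, I_N)`
independent of `n`, then for any `w ∈ ℝ`:
`E‖x_0 − (w Aᵀy + (1−w) x̃)‖² = w² (‖(I−AᵀA)x_0‖² + σ_y² ‖A‖_F²) + (1−w)² σ̃² N`. -/
theorem fused_estimate_mse
    (M N : ℕ) (hM : 1 ≤ M) (hN : 1 ≤ N)
    (A : Matrix (Fin M) (Fin N) ℝ) (x0 : Fin N → ℝ)
    (σy : ℝ) (hσy : 0 ≤ σy) (σt : ℝ) (hσt : 0 ≤ σt) (w : ℝ) :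
    (∫ p : (Fin M → ℝ) × (Fin N → ℝ),
        ∑ i, (x0 i - (w • A.transpose.mulVec (A.mulVec x0 + p.1)
            + (1 - w) • (x0 + σt • p.2)) i) ^ 2
        ∂((Measure.pi fun _ : Fin M => gaussianReal 0 ⟨σy ^ 2, sq_nonneg _⟩).prod
            (Measure.pi fun _ : Fin N => gaussianReal 0 1)))
      = w ^ 2 * ((∑ i, (x0 i - A.transpose.mulVec (A.mulVec x0) i) ^ 2)
            + σy ^ 2 * ∑ i, ∑ j, (A i j) ^ 2)
        + (1 - w) ^ 2 * σt ^ 2 * N :=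
  fused_estimate_mse_general M N A x0 σy σt w
end
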